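/- Let L be the Schrödinger-Virasoro algebra and D ∈ Der(L, L⊗L) a derivation homogeneous of degree 0. Then D(L_0) ∈ F·(M_0 ⊗ M_0). -/

import Mathlib

open TensorProduct

/-- Index set for the basis of the Schrödinger–Virasoro algebra:
`Sum.inl n ↔ L_n`, `Sum.inr (Sum.inl n) ↔ Y_{n+1/2}`, `Sum.inr (Sum.inr n) ↔ M_n`. -/
abbrev SVIx : Type := ℤ ⊕ ℤ ⊕ ℤ

variable (F : Type) [Field F] [CharZero F]

/-- Underlying space of the Schrödinger–Virasoro algebra: the free `F`-module on `SVIx`. -/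
abbrev SVL := SVIx →₀ F

noncomputable def Lb (n : ℤ) : SVL F := Finsupp.single (Sum.inl n) 1
noncomputable def Yb (n : ℤ) : SVL F := Finsupp.single (Sum.inr (Sum.inl n)) 1
noncomputable def Mb (n : ℤ) : SVL F := Finsupp.single (Sum.inr (Sum.inr n)) 1

/-- The bracket of basis vectors.  Here `Yb n` stands for `Y_{n+1/2}`, so
`[L_m, Y_{n+1/2}] = ((n+1/2) - m/2) Y_{m+n+1/2}` and
`[Y_{a+1/2}, Y_{b+1/2}] = (b-a) M_{a+b+1}`; all other brackets vanish. -/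
noncomputable def brIx : SVIx → SVIx → SVL F
  | Sum.inl m, Sum.inl n => ((n - m : ℤ) : F) • Lb F (m + n)
  | Sum.inl m, Sum.inr (Sum.inl n) => (((2*n + 1 - m : ℤ) : F) / 2) • Yb F (m + n)
  | Sum.inl m, Sum.inr (Sum.inr n) => ((n : ℤ) : F) • Mb F (m + n)
  | Sum.inr (Sum.inl n), Sum.inl m => -((((2*n + 1 - m : ℤ) : F) / 2) • Yb F (m + n))
  | Sum.inr (Sum.inl a), Sum.inr (Sum.inl b) => ((b - a : ℤ) : F) • Mb F (a + b + 1)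
  | Sum.inr (Sum.inr n), Sum.inl m => -(((n : ℤ) : F) • Mb F (m + n))
  | _, _ => 0

/-- The bracket of the Schrödinger–Virasoro algebra: the bilinear extension of `brIx`. -/
noncomputable def bk : SVL F →ₗ[F] SVL F →ₗ[F] SVL F :=
  Finsupp.lsum F fun i => LinearMap.toSpanSingleton F (SVL F →ₗ[F] SVL F)
    (Finsupp.lsum F fun j => LinearMap.toSpanSingleton F (SVL F) (brIx F i j))

abbrev VV := SVL F ⊗[F] SVL F

noncomputable instance : AddCommGroup (VV F) := inferInstance

noncomputable instance : Zero (VV F) :=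
  (inferInstance : AddCommMonoid (VV F)).toAddMonoid.toZero

/-- The adjoint diagonal action of `L` on `L ⊗ L`, as a bilinear map:
`x · (a ⊗ b) = [x,a] ⊗ b + a ⊗ [x,b]`. -/
noncomputable def adVb : SVL F →ₗ[F] VV F →ₗ[F] VV F :=
  ((LinearMap.rTensorHom (SVL F) : (SVL F →ₗ[F] SVL F) →ₗ[F] (VV F →ₗ[F] VV F)) ∘ₗ bk F)
    + ((LinearMap.lTensorHom (SVL F) : (SVL F →ₗ[F] SVL F) →ₗ[F] (VV F →ₗ[F] VV F)) ∘ₗ bk F)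

/-- The twist map `τ(x ⊗ y) = y ⊗ x`. -/
noncomputable def tau : VV F →ₗ[F] VV F := (TensorProduct.comm F (SVL F) (SVL F)).toLinearMap

/-- The map `1 - τ`. -/
noncomputable def oneMinusTau : VV F →ₗ[F] VV F where
  toFun v := v - tau F v
  map_add' x y := by
    simp only [map_add]; exact sub_add_sub_comm x (tau F x) y (tau F y) ▸ rfl
  map_smul' c x := by simp only [map_smul, RingHom.id_apply, smul_sub]

/-- `Im (1 - τ) ⊂ L ⊗ L`. -/
noncomputable def skewIm : Submodule F (VV F) := LinearMap.range (oneMinusTau F)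
/-- Values on basis elements of the special derivations `D` with parameters
`(α, α†, β, β†, γ, γ†)`:  `D(L_n) = (nα+γ) M₀⊗M_n + (nα†+γ†) M_n⊗M₀`,
`D(Y_{n+1/2}) = β M₀⊗Y_{n+1/2} + β† Y_{n+1/2}⊗M₀`, `D(M_n) = 2(β M₀⊗M_n + β† M_n⊗M₀)`. -/
noncomputable def dval (a a' b b' c c' : F) : SVIx → VV F
  | Sum.inl n => (((n : ℤ) : F) * a + c) • (Mb F 0 ⊗ₜ[F] Mb F n)
      + (((n : ℤ) : F) * a' + c') • (Mb F n ⊗ₜ[F] Mb F 0)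
  | Sum.inr (Sum.inl n) => b • (Mb F 0 ⊗ₜ[F] Yb F n) + b' • (Yb F n ⊗ₜ[F] Mb F 0)
  | Sum.inr (Sum.inr n) => (2 * b) • (Mb F 0 ⊗ₜ[F] Mb F n) + (2 * b') • (Mb F n ⊗ₜ[F] Mb F 0)

/-- The special derivation with parameters `(α, α†, β, β†, γ, γ†)`. -/
noncomputable def Dmap (a a' b b' c c' : F) : SVL F →ₗ[F] VV F :=
  Finsupp.lsum F fun i => LinearMap.toSpanSingleton F (VV F) (dval F a a' b b' c c' i)

/-- `D` is a derivation from `L` to the `L`-module `L ⊗ L`. -/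
def IsDer (D : SVL F →ₗ[F] VV F) : Prop :=
  ∀ x y : SVL F, D (bk F x y) = adVb F x (D y) - adVb F y (D x)

/-- Twice the degree of a basis element (so that everything is `ℤ`-valued):
`deg2 (L_n) = deg2 (M_n) = 2n` and `deg2 (Y_{n+1/2}) = 2n + 1`. -/
def deg2 : SVIx → ℤ
  | Sum.inl n => 2 * n
  | Sum.inr (Sum.inl n) => 2 * n + 1
  | Sum.inr (Sum.inr n) => 2 * n

/-- `L ⊗ L` is identified with the finitely supported functions on `SVIx × SVIx`. -/
noncomputable def toF2 : VV F ≃ₗ[F] (SVIx × SVIx →₀ F) := finsuppTensorFinsupp' F SVIx SVIx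

/-- The projection of `v ∈ L ⊗ L` onto its homogeneous component of (twice-)degree `d`. -/
noncomputable def projV (d : ℤ) (v : VV F) : VV F :=
  (toF2 F).symm (((toF2 F) v).filter (fun ij => deg2 ij.1 + deg2 ij.2 = d))

/-- `x ∈ L` is homogeneous of (twice-)degree `d`. -/
def homL (d : ℤ) (x : SVL F) : Prop := ∀ i ∈ x.support, deg2 i = d

/-- A derivation `D : L → L ⊗ L` is homogeneous of (twice-)degree `a`. -/
def homDer (a : ℤ) (D : SVL F →ₗ[F] VV F) : Prop :=
  ∀ (q : ℤ) (x : SVL F), homL F q x → projV F (q + a) (D x) = D x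



/-!
Write `w = D(L₀)`. Since `D` has degree `0`, `D(x)` is an `ad L₀`-eigenvector with the same
eigenvalue as `x` for every basis vector `x`; applying `D` to `[x, L₀]` then gives `x · w = 0`.
So `w` is an `L`-invariant of degree `0` in `L ⊗ L`. Degree kills the coordinates of `w` at pairs
of basis vectors of different parity; reading off the coordinates of `M_k · w`, `Y_k · w` and
`L_k · w` kills all the others except the one at `M₀ ⊗ M₀`.
-/

theorem Finsupp.eq_zero_of_eventually_apply_eq {α β M : Type*} [Zero M] [Infinite β]
    (c : α →₀ M) {ι : β → α} (hι : Function.Injective ι) {v : M}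
    (h : ∀ᶠ k in Filter.cofinite, c (ι k) = v) : v = 0 := by
  have hzero : ∀ᶠ k in Filter.cofinite, c (ι k) = 0 :=
    (hι.tendsto_cofinite.eventually c.support.eventually_cofinite_notMem).mono
      fun _ hk => Finsupp.notMem_support_iff.mp hk
  obtain ⟨k, hv, h0⟩ := (h.and hzero).exists
  exact hv ▸ h0

theorem finsuppTensorFinsupp'_rTensor_apply {R α β : Type*} [CommSemiring R]
    (f : (α →₀ R) →ₗ[R] (α →₀ R)) {p a : α} {s : R} (hf : ∀ u, f u p = s * u a)
    (w : (α →₀ R) ⊗[R] (β →₀ R)) (q : β) :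
    finsuppTensorFinsupp' R α β (f.rTensor _ w) (p, q)
      = s * finsuppTensorFinsupp' R α β w (a, q) := by
  induction w using TensorProduct.induction_on with
  | zero => simp
  | tmul x y => simp [finsuppTensorFinsupp'_apply_apply, hf, mul_assoc]
  | add x y hx hy => simp [map_add, hx, hy, mul_add]

theorem finsuppTensorFinsupp'_lTensor_apply {R α β : Type*} [CommSemiring R]
    (f : (β →₀ R) →ₗ[R] (β →₀ R)) {q b : β} {t : R} (hf : ∀ u, f u q = t * u b)
    (w : (α →₀ R) ⊗[R] (β →₀ R)) (p : α) :
    finsuppTensorFinsupp' R α β (f.lTensor _ w) (p, q)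
      = t * finsuppTensorFinsupp' R α β w (p, b) := by
  induction w using TensorProduct.induction_on with
  | zero => simp
  | tmul x y => simp [finsuppTensorFinsupp'_apply_apply, hf, mul_left_comm]
  | add x y hx hy => simp [map_add, hx, hy, mul_add]

abbrev Li (n : ℤ) : SVIx := Sum.inl n
abbrev Yi (n : ℤ) : SVIx := Sum.inr (Sum.inl n)
abbrev Mi (n : ℤ) : SVIx := Sum.inr (Sum.inr n)

omit [CharZero F] in
theorem adVb_apply (x : SVL F) (v : VV F) :
    adVb F x v = (bk F x).rTensor _ v + (bk F x).lTensor _ v := by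
  simp [adVb, LinearMap.coe_rTensorHom, LinearMap.coe_lTensorHom]

omit [CharZero F] in
theorem bk_single_apply_of_brIx {i p a : SVIx} {s : F}
    (h : ∀ j, brIx F i j p = Finsupp.single a s j) (u : SVL F) :
    bk F (Finsupp.single i 1) u p = s * u a := by
  induction u using Finsupp.induction_linear with
  | zero => simp
  | add x y hx hy => simp [hx, hy, mul_add]
  | single j r => simp [bk, h, Finsupp.single_apply, mul_comm, eq_comm]

omit [CharZero F] in
theorem toF2_adVb_single_apply {i p q a b : SVIx} {s t : F}
    (hs : ∀ j, brIx F i j p = Finsupp.single a s j) (ht : ∀ j, brIx F i j q = Finsupp.single b t j)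
    (w : VV F) :
    toF2 F (adVb F (Finsupp.single i 1) w) (p, q) = s * toF2 F w (a, q) + t * toF2 F w (p, b) := by
  rw [adVb_apply, map_add, Finsupp.add_apply]
  exact congrArg₂ (· + ·) (finsuppTensorFinsupp'_rTensor_apply _ (bk_single_apply_of_brIx F hs) _ _)
    (finsuppTensorFinsupp'_lTensor_apply _ (bk_single_apply_of_brIx F ht) _ _)

omit [CharZero F] in
theorem brIx_Mi_apply_Mi (k m : ℤ) (j : SVIx) :
    brIx F (Mi k) j (Mi (m + k)) = Finsupp.single (Li m) (-(k : F)) j := by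
  rcases j with n | n | n <;> simp [brIx, Mb, Finsupp.single_apply, eq_comm]

omit [CharZero F] in
theorem brIx_Mi_apply_Li (k n : ℤ) (j : SVIx) : brIx F (Mi k) j (Li n) = 0 := by
  rcases j with m | m | m <;> simp [brIx, Mb]

omit [CharZero F] in
theorem brIx_Yi_apply_Mi (k a : ℤ) (j : SVIx) :
    brIx F (Yi k) j (Mi (k + a + 1)) = Finsupp.single (Yi a) ((a - k : ℤ) : F) j := by
  rcases j with n | n | n <;> simp [brIx, Yb, Mb, Finsupp.single_apply, eq_comm]
  split_ifs <;> subst_vars <;> ring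

omit [CharZero F] in
theorem brIx_Yi_apply_Yi (k b : ℤ) (j : SVIx) :
    brIx F (Yi k) j (Yi (b + k)) = Finsupp.single (Li b) (-(((2 * k + 1 - b : ℤ) : F) / 2)) j := by
  rcases j with n | n | n <;> simp [brIx, Yb, Mb, Finsupp.single_apply, eq_comm]
  split_ifs <;> subst_vars <;> ring

omit [CharZero F] in
theorem brIx_Li_apply_Mi (k a : ℤ) (j : SVIx) :
    brIx F (Li k) j (Mi (k + a)) = Finsupp.single (Mi a) (a : F) j := by
  rcases j with n | n | n <;> simp [brIx, Lb, Yb, Mb, Finsupp.single_apply, eq_comm]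
  split_ifs <;> subst_vars <;> ring

theorem brIx_Li_zero_apply (p j : SVIx) :
    brIx F (Li 0) j p = Finsupp.single p ((deg2 p : F) / 2) j := by
  rcases j with n | n | n <;> rcases p with m | m | m <;>
    simp [brIx, Lb, Yb, Mb, deg2, Finsupp.single_apply, eq_comm] <;>
    split_ifs <;> subst_vars <;> ring

theorem bk_single_Lb_zero (i : SVIx) :
    bk F (Finsupp.single i 1) (Lb F 0) = -((deg2 i : F) / 2) • Finsupp.single i 1 := by
  rcases i with n | n | n <;> simp [bk, brIx, Lb, Yb, Mb, deg2]

omit [CharZero F] in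
theorem toF2_eq_zero_of_projV_eq {d : ℤ} {v : VV F} (h : projV F d v = v) {p q : SVIx}
    (hpq : deg2 p + deg2 q ≠ d) : toF2 F v (p, q) = 0 := by
  rw [← h, projV, LinearEquiv.apply_symm_apply]
  exact Finsupp.filter_apply_neg _ _ hpq

theorem adVb_Lb_zero_of_projV_eq {d : ℤ} {v : VV F} (h : projV F d v = v) :
    adVb F (Lb F 0) v = ((d : F) / 2) • v := by
  refine (toF2 F).injective (Finsupp.ext fun ⟨p, q⟩ => ?_)
  rw [map_smul, Finsupp.smul_apply, Lb,
    toF2_adVb_single_apply F (brIx_Li_zero_apply F p) (brIx_Li_zero_apply F q)]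
  by_cases hd : deg2 p + deg2 q = d
  · subst hd
    push_cast
    ring
  · simp [toF2_eq_zero_of_projV_eq F h hd]

omit [CharZero F] in
theorem homL_single (i : SVIx) : homL F (deg2 i) (Finsupp.single i 1) := by
  intro j hj
  rw [Finset.mem_singleton.mp (Finsupp.support_single_subset hj)]

theorem adVb_single_apply_Lb_zero_eq_zero {D : SVL F →ₗ[F] VV F} (hder : IsDer F D)
    (hhom : homDer F 0 D) (i : SVIx) : adVb F (Finsupp.single i 1) (D (Lb F 0)) = 0 := by
  have hDi : projV F (deg2 i) (D (Finsupp.single i 1)) = D (Finsupp.single i 1) := by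
    simpa using hhom _ _ (homL_single F i)
  have key := hder (Finsupp.single i 1) (Lb F 0)
  rw [bk_single_Lb_zero, map_smul, adVb_Lb_zero_of_projV_eq F hDi] at key
  linear_combination (norm := module) -key

section Invariant

variable {F} {w : VV F}

omit [CharZero F] in
theorem mul_toF2_add_mul_toF2_eq_zero_of_invariant
    (hinv : ∀ i, adVb F (Finsupp.single i 1) w = 0)
    {i p q a b : SVIx} {s t : F} (hs : ∀ j, brIx F i j p = Finsupp.single a s j)
    (ht : ∀ j, brIx F i j q = Finsupp.single b t j) :
    s * toF2 F w (a, q) + t * toF2 F w (p, b) = 0 := by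
  rw [← toF2_adVb_single_apply F hs ht, hinv, map_zero, Finsupp.zero_apply]

omit [CharZero F] in
theorem toF2_Li_Li_eq_zero_of_invariant (hinv : ∀ i, adVb F (Finsupp.single i 1) w = 0)
    (m n : ℤ) : toF2 F w (Li m, Li n) = 0 := by
  have h := mul_toF2_add_mul_toF2_eq_zero_of_invariant hinv (brIx_Mi_apply_Mi F 1 m)
    (q := Li n) (b := Li n) (t := 0) (by simp [brIx_Mi_apply_Li])
  simpa using h

theorem toF2_Li_Mi_add_toF2_Mi_Li_eq_zero_of_invariant
    (hinv : ∀ i, adVb F (Finsupp.single i 1) w = 0) {k : ℤ} (hk : k ≠ 0) (m n : ℤ) :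
    toF2 F w (Li m, Mi (n + k)) + toF2 F w (Mi (m + k), Li n) = 0 := by
  have h := mul_toF2_add_mul_toF2_eq_zero_of_invariant hinv (brIx_Mi_apply_Mi F k m)
    (brIx_Mi_apply_Mi F k n)
  rw [← mul_add, mul_eq_zero] at h
  exact h.resolve_left (neg_ne_zero.mpr (Int.cast_ne_zero.mpr hk))

/- The coordinate at `(L_m, M_n)` reappears, up to sign, at `(M_{m+k}, L_{n-k})` for every
`k ≠ 0`; a finitely supported `w` cannot take a nonzero value at all of them. -/
theorem toF2_Li_Mi_eq_zero_of_invariant (hinv : ∀ i, adVb F (Finsupp.single i 1) w = 0)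
    (m n : ℤ) : toF2 F w (Li m, Mi n) = 0 := by
  have hinj : Function.Injective fun k : ℤ => (Mi (m + k), Li (n - k)) := by
    intro k l hkl
    simp only [Prod.mk.injEq, Sum.inr.injEq, Sum.inl.injEq] at hkl
    omega
  have h : ∀ᶠ k in Filter.cofinite, toF2 F w (Mi (m + k), Li (n - k)) = -toF2 F w (Li m, Mi n) :=
    (Filter.eventually_cofinite_ne 0).mono fun k hk => by
      have := toF2_Li_Mi_add_toF2_Mi_Li_eq_zero_of_invariant hinv hk m (n - k)
      rw [sub_add_cancel] at this
      exact eq_neg_of_add_eq_zero_right this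
  exact neg_eq_zero.mp ((toF2 F w).eq_zero_of_eventually_apply_eq hinj h)

theorem toF2_Mi_Li_eq_zero_of_invariant (hinv : ∀ i, adVb F (Finsupp.single i 1) w = 0)
    (m n : ℤ) : toF2 F w (Mi m, Li n) = 0 := by
  have h := toF2_Li_Mi_add_toF2_Mi_Li_eq_zero_of_invariant hinv one_ne_zero (m - 1) n
  rwa [sub_add_cancel, toF2_Li_Mi_eq_zero_of_invariant hinv, zero_add] at h

theorem toF2_Yi_Yi_eq_zero_of_invariant (hinv : ∀ i, adVb F (Finsupp.single i 1) w = 0)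
    (a b : ℤ) : toF2 F w (Yi a, Yi b) = 0 := by
  have h := mul_toF2_add_mul_toF2_eq_zero_of_invariant hinv (brIx_Yi_apply_Mi F (a - 1) a)
    (brIx_Yi_apply_Yi F (a - 1) (b - (a - 1)))
  simpa [toF2_Mi_Li_eq_zero_of_invariant hinv] using h

theorem toF2_Mi_Mi_eq_zero_of_invariant (hinv : ∀ i, adVb F (Finsupp.single i 1) w = 0)
    {a b : ℤ} (hab : (a, b) ≠ (0, 0)) : toF2 F w (Mi a, Mi b) = 0 := by
  rcases eq_or_ne a 0 with rfl | ha
  · have h := mul_toF2_add_mul_toF2_eq_zero_of_invariant hinv (brIx_Li_apply_Mi F 0 0)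
      (brIx_Li_apply_Mi F 0 b)
    simpa [show b ≠ 0 by simpa using hab] using h
  · have h := mul_toF2_add_mul_toF2_eq_zero_of_invariant hinv (brIx_Li_apply_Mi F b a)
      (brIx_Li_apply_Mi F b 0)
    simpa [ha] using h

theorem toF2_eq_zero_of_invariant (hdeg : projV F 0 w = w)
    (hinv : ∀ i, adVb F (Finsupp.single i 1) w = 0) {p q : SVIx} (hpq : (p, q) ≠ (Mi 0, Mi 0)) :
    toF2 F w (p, q) = 0 := by
  rcases p with m | m | m <;> rcases q with n | n | n
  · exact toF2_Li_Li_eq_zero_of_invariant hinv m n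
  · exact toF2_eq_zero_of_projV_eq F hdeg (by simp only [deg2]; omega)
  · exact toF2_Li_Mi_eq_zero_of_invariant hinv m n
  · exact toF2_eq_zero_of_projV_eq F hdeg (by simp only [deg2]; omega)
  · exact toF2_Yi_Yi_eq_zero_of_invariant hinv m n
  · exact toF2_eq_zero_of_projV_eq F hdeg (by simp only [deg2]; omega)
  · exact toF2_Mi_Li_eq_zero_of_invariant hinv m n
  · exact toF2_eq_zero_of_projV_eq F hdeg (by simp only [deg2]; omega)
  · exact toF2_Mi_Mi_eq_zero_of_invariant hinv (by simpa using hpq)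

theorem exists_eq_smul_Mb_zero_tmul_of_invariant (hdeg : projV F 0 w = w)
    (hinv : ∀ i, adVb F (Finsupp.single i 1) w = 0) :
    ∃ c : F, w = c • (Mb F 0 ⊗ₜ[F] Mb F 0) := by
  refine ⟨toF2 F w (Mi 0, Mi 0), (toF2 F).injective (Finsupp.ext fun ⟨p, q⟩ => ?_)⟩
  rw [map_smul, Finsupp.smul_apply, toF2, finsuppTensorFinsupp'_apply_apply]
  by_cases hpq : (p, q) = (Mi 0, Mi 0)
  · obtain ⟨rfl, rfl⟩ := Prod.mk.inj hpq
    simp [Mb]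
  · rw [← toF2, toF2_eq_zero_of_invariant hdeg hinv hpq]
    simp only [Mb, Finsupp.single_apply]
    split_ifs with hq hp
    · exact absurd (by rw [← hp, ← hq]) hpq
    all_goals simp

end Invariant

/-- A degree-zero derivation `D : L → L ⊗ L` satisfies `D(L₀) ∈ F • (M₀ ⊗ M₀)`. -/
theorem sv_degree_zero_derivation_L0 :
    ∀ D : SVL F →ₗ[F] VV F, IsDer F D → homDer F 0 D →
      ∃ c : F, D (Lb F 0) = c • (Mb F 0 ⊗ₜ[F] Mb F 0) := by
  intro D hder hhom
  refine exists_eq_smul_Mb_zero_tmul_of_invariant ?_ (adVb_single_apply_Lb_zero_eq_zero F hder hhom)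
  simpa using hhom 0 (Lb F 0) (homL_single F (Li 0))
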